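/- arXiv:1507.03439 — 3 statements merged into one kernel-verified Lean document; each statement's English description precedes it below -/
import Mathlib

section
/- Let a₁,…,a_n ∈ ℕ be item sizes, b ∈ ℕ a bin size, k ∈ ℕ, and suppose ∑ᵢ aᵢ ≤ k·b. Let L ⊆ {1,…,n} be the set of items with aᵢ < b/(k+1). If the items in {1,…,n} \ L admit a packing into k+1 bins each of total size at most b, then all items {1,…,n} admit a packing into k+1 bins each of total size at most b. -/
open Finset

lemma aux_8 (n k b : ℕ) (a : Fin n → ℕ)
    (hsum : (∑ i, a i) ≤ k * b) (S : Finset (Fin n)) :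
    (∀ x ∈ S, (k + 1) * a x < b) →
    ∀ f : Fin n → Fin (k + 1),
      (∀ j, (∑ i ∈ Finset.univ.filter fun i => i ∉ S ∧ f i = j, a i) ≤ b) →
      ∃ g : Fin n → Fin (k + 1),
        ∀ j, (∑ i ∈ Finset.univ.filter fun i => g i = j, a i) ≤ b := by
  classical
  induction S using Finset.induction with
  | empty =>
    intro _ f hf
    exact ⟨f, fun j => by simpa using hf j⟩
  | @insert x S hx ih =>
    intro hS f hf
    have hax : (k + 1) * a x < b := hS x (mem_insert_self x S)
    have htot : (∑ j, ∑ i ∈ Finset.univ.filter fun i => i ∉ insert x S ∧ f i = j, a i)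
        ≤ k * b := by
      calc (∑ j, ∑ i ∈ Finset.univ.filter fun i => i ∉ insert x S ∧ f i = j, a i)
          = ∑ i ∈ Finset.univ.filter fun i => i ∉ insert x S, a i := by
            rw [← Finset.sum_fiberwise (Finset.univ.filter fun i => i ∉ insert x S) f a]
            congr 1; ext j; rw [Finset.filter_filter]
        _ ≤ ∑ i, a i := Finset.sum_le_sum_of_subset (Finset.filter_subset _ _)
        _ ≤ k * b := hsum
    have hroom : ∃ j₀ : Fin (k + 1),
        (∑ i ∈ Finset.univ.filter fun i => i ∉ insert x S ∧ f i = j₀, a i) + a x ≤ b := by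
      by_contra h
      push_neg at h
      have hge : ∀ j : Fin (k+1), b + 1 ≤
          (∑ i ∈ Finset.univ.filter fun i => i ∉ insert x S ∧ f i = j, a i) + a x := fun j => h j
      have hsum2 := Finset.sum_le_sum (fun j (_ : j ∈ (Finset.univ : Finset (Fin (k+1)))) => hge j)
      simp only [Finset.sum_add_distrib, Finset.sum_const, Finset.card_univ,
        Fintype.card_fin, smul_eq_mul] at hsum2
      nlinarith [htot, hax, hsum2]
    obtain ⟨j₀, hj₀⟩ := hroom
    set f' := Function.update f x j₀ with hf'
    apply ih (fun y hy => hS y (mem_insert_of_mem hy)) f'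
    intro j
    by_cases hjj : j = j₀
    · rw [hjj]
      have hxmem : x ∉ (Finset.univ.filter fun i => i ∉ insert x S ∧ f i = j₀) := by
        simp
      have hset : (Finset.univ.filter fun i => i ∉ S ∧ f' i = j₀)
          ⊆ insert x (Finset.univ.filter fun i => i ∉ insert x S ∧ f i = j₀) := by
        intro i hi
        simp only [Finset.mem_filter, Finset.mem_univ, true_and] at hi
        rcases eq_or_ne i x with rfl | hix
        · exact mem_insert_self _ _
        · apply mem_insert_of_mem
          simp only [Finset.mem_filter, Finset.mem_univ, true_and, Finset.mem_insert]
          refine ⟨by tauto, ?_⟩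
          rw [hf', Function.update_of_ne hix] at hi
          exact hi.2
      calc (∑ i ∈ Finset.univ.filter fun i => i ∉ S ∧ f' i = j₀, a i)
          ≤ ∑ i ∈ insert x (Finset.univ.filter fun i => i ∉ insert x S ∧ f i = j₀), a i :=
            Finset.sum_le_sum_of_subset hset
        _ = a x + ∑ i ∈ Finset.univ.filter fun i => i ∉ insert x S ∧ f i = j₀, a i :=
            Finset.sum_insert hxmem
        _ ≤ b := by omega
    · have hset : (Finset.univ.filter fun i => i ∉ S ∧ f' i = j)
          = Finset.univ.filter fun i => i ∉ insert x S ∧ f i = j := by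
        ext i
        simp only [Finset.mem_filter, Finset.mem_univ, true_and, Finset.mem_insert]
        constructor
        · rintro ⟨hiS, hfi⟩
          rcases eq_or_ne i x with rfl | hix
          · rw [hf', Function.update_self] at hfi; exact (hjj hfi.symm).elim
          · rw [hf', Function.update_of_ne hix] at hfi
            exact ⟨by tauto, hfi⟩
        · rintro ⟨hiS, hfi⟩
          have hix : i ≠ x := by tauto
          rw [hf', Function.update_of_ne hix]
          exact ⟨by tauto, hfi⟩
      rw [hset]; exact hf j

theorem stmt_8 (n k b : ℕ) (a : Fin n → ℕ)
    (hsum : (∑ i, a i) ≤ k * b)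
    (L : Finset (Fin n))
    (hL : L = Finset.univ.filter fun i : Fin n => (a i : ℚ) < (b : ℚ) / (k + 1))
    (hbig : ∃ f : Fin n → Fin (k + 1),
      ∀ j, (∑ i ∈ Finset.univ.filter fun i => i ∉ L ∧ f i = j, a i) ≤ b) :
    ∃ g : Fin n → Fin (k + 1),
      ∀ j, (∑ i ∈ Finset.univ.filter fun i => g i = j, a i) ≤ b := by
  obtain ⟨f, hf⟩ := hbig
  refine aux_8 n k b a hsum L ?_ f hf
  intro x hx
  rw [hL, Finset.mem_filter] at hx
  have h := hx.2
  rw [lt_div_iff₀ (by positivity)] at h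
  have : ((k + 1) * a x : ℚ) < b := by linarith
  exact_mod_cast this
end

section
/- Let A ∈ {0,1}^{m×n} be a matrix in which every row has at most 5 nonzero entries, and let c ∈ {0,…,5}^m. Define a_j = ∑_{i=1}^m A_{i,j}·10^{m−i} for each column j, and C = ∑_{i=1}^m c_i·10^{m−i}. Then for z ∈ {0,1}^n, Az = c holds if and only if ∑_{j=1}^n a_j·z_j = C. -/
lemma digits_unique_aux : ∀ (m : ℕ) (f g : ℕ → ℕ), (∀ k < m, f k < 10) → (∀ k < m, g k < 10) →
    (∑ k ∈ Finset.range m, f k * 10 ^ k = ∑ k ∈ Finset.range m, g k * 10 ^ k) →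
    ∀ k < m, f k = g k := by
  intro m
  induction m with
  | zero => intro f g _ _ _ k hk; omega
  | succ m ih =>
    intro f g hf hg hsum k hk
    have h1 : ∀ (h : ℕ → ℕ), ∑ k ∈ Finset.range m, h (k+1) * 10 ^ (k+1)
        = 10 * ∑ k ∈ Finset.range m, h (k+1) * 10 ^ k := by
      intro h
      rw [Finset.mul_sum]
      exact Finset.sum_congr rfl (fun k _ => by ring)
    rw [Finset.sum_range_succ', Finset.sum_range_succ', h1 f, h1 g] at hsum
    simp only [pow_zero, mul_one] at hsum
    have hf0 := hf 0 (by omega)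
    have hg0 := hg 0 (by omega)
    have h0 : f 0 = g 0 := by omega
    have hS : ∑ k ∈ Finset.range m, f (k+1) * 10 ^ k
        = ∑ k ∈ Finset.range m, g (k+1) * 10 ^ k := by omega
    rcases k with _ | j
    · exact h0
    · exact ih (fun k => f (k+1)) (fun k => g (k+1))
        (fun k hk => hf (k+1) (by omega)) (fun k hk => hg (k+1) (by omega)) hS j (by omega)

lemma reidx (m : ℕ) (f : ℕ → ℕ) :
    ∑ k ∈ Finset.range m, f k * 10 ^ (m - 1 - k)
      = ∑ k ∈ Finset.range m, f (m - 1 - k) * 10 ^ k := by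
  rw [← Finset.sum_range_reflect (fun k => f (m - 1 - k) * 10 ^ k) m]
  exact Finset.sum_congr rfl (fun k hk => by
    rw [Finset.mem_range] at hk
    congr 1 <;> congr 1 <;> omega)

lemma fin_digits (m : ℕ) (d e : Fin m → ℕ) (hd : ∀ i, d i < 10) (he : ∀ i, e i < 10)
    (h : ∑ i, d i * 10 ^ (m - 1 - (i : ℕ)) = ∑ i, e i * 10 ^ (m - 1 - (i : ℕ))) :
    ∀ i, d i = e i := by
  set D : ℕ → ℕ := fun k => if h : k < m then d ⟨k, h⟩ else 0 with hD
  set E : ℕ → ℕ := fun k => if h : k < m then e ⟨k, h⟩ else 0 with hE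
  have hconv : ∀ (u : Fin m → ℕ) (U : ℕ → ℕ), U = (fun k => if h : k < m then u ⟨k, h⟩ else 0) →
      ∑ i, u i * 10 ^ (m - 1 - (i : ℕ)) = ∑ k ∈ Finset.range m, U (m - 1 - k) * 10 ^ k := by
    intro u U hU
    rw [← reidx]
    rw [Finset.sum_range fun k => U k * 10 ^ (m - 1 - k)]
    exact Finset.sum_congr rfl (fun i _ => by simp [hU, i.isLt])
  rw [hconv d D hD, hconv e E hE] at h
  have key := digits_unique_aux m (fun k => D (m - 1 - k)) (fun k => E (m - 1 - k))
    (fun k hk => by simp only [hD]; rw [dif_pos (by omega : m - 1 - k < m)]; exact hd _)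
    (fun k hk => by simp only [hE]; rw [dif_pos (by omega : m - 1 - k < m)]; exact he _)
    h
  intro i
  have hi : (i : ℕ) < m := i.isLt
  have this : D (m - 1 - (m - 1 - (i : ℕ))) = E (m - 1 - (m - 1 - (i : ℕ))) := key (m - 1 - (i : ℕ)) (by omega)
  have heq : m - 1 - (m - 1 - (i : ℕ)) = (i : ℕ) := by omega
  rw [heq] at this
  simpa [hD, hE, hi] using this

theorem stmt_15 (m n : ℕ) (A : Fin m → Fin n → ℕ) (c : Fin m → ℕ)
    (hA01 : ∀ i j, A i j ≤ 1)
    (hrow : ∀ i, (Finset.univ.filter fun j : Fin n => A i j ≠ 0).card ≤ 5)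
    (hc : ∀ i, c i ≤ 5)
    (a : Fin n → ℕ) (ha : ∀ j, a j = ∑ i, A i j * 10 ^ (m - 1 - (i : ℕ)))
    (C : ℕ) (hC : C = ∑ i, c i * 10 ^ (m - 1 - (i : ℕ))) :
    ∀ z : Fin n → ℕ, (∀ j, z j ≤ 1) →
      ((∀ i, (∑ j, A i j * z j) = c i) ↔ (∑ j, a j * z j) = C) := by
  intro z hz
  have hd : ∀ i, (∑ j, A i j * z j) ≤ 5 := by
    intro i
    calc ∑ j, A i j * z j
        = ∑ j ∈ Finset.univ.filter (fun j => A i j ≠ 0), A i j * z j := by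
          refine (Finset.sum_filter_of_ne ?_).symm
          intro j _ hne
          intro h0
          rw [h0, zero_mul] at hne
          exact hne rfl
      _ ≤ ∑ j ∈ Finset.univ.filter (fun j => A i j ≠ 0), 1 :=
          Finset.sum_le_sum (fun j _ => le_trans (Nat.mul_le_mul (hA01 i j) (hz j)) (by norm_num))
      _ = (Finset.univ.filter fun j : Fin n => A i j ≠ 0).card := by simp
      _ ≤ 5 := hrow i
  have key : ∑ j, a j * z j = ∑ i, (∑ j, A i j * z j) * 10 ^ (m - 1 - (i : ℕ)) := by
    simp_rw [ha, Finset.sum_mul]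
    rw [Finset.sum_comm]
    exact Finset.sum_congr rfl (fun i _ => Finset.sum_congr rfl (fun j _ => by ring))
  rw [hC, key]
  constructor
  · intro h
    exact Finset.sum_congr rfl (fun i _ => by rw [h i])
  · intro h i
    exact fin_digits m (fun i => ∑ j, A i j * z j) c
      (fun i => lt_of_le_of_lt (hd i) (by norm_num)) (fun i => lt_of_le_of_lt (hc i) (by norm_num)) h i
end

section
/- Let f = ∑_{i=1}^r w_i · f_i and f̃ = ∑_{i=1}^r w̃_i · f_i, where f₁,…,f_r ∈ ℤ[X₁,…,X_n] are monomials of degree at most d with coefficient 1, w ∈ ℚ^r, w̃ ∈ ℤ^r. Suppose sign(w·b) = sign(w̃·b) for all b ∈ ℤ^r with ‖b‖₁ ≤ 2r·u^d. Then sign(f(x) − f(y)) = sign(f̃(x) − f̃(y)) for all x, y ∈ {-u,…,u}^n. -/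
lemma eval_bound {n d u : ℕ} (hu : 1 ≤ u) (e : Fin n →₀ ℕ)
    (hd : (e.sum fun _ k => k) ≤ d) (x : Fin n → ℤ) (hx : ∀ i, |x i| ≤ (u : ℤ)) :
    |MvPolynomial.eval x (MvPolynomial.monomial e (1 : ℤ))| ≤ (u : ℤ) ^ d := by
  rw [MvPolynomial.eval_monomial, one_mul]
  have h1 : |e.prod fun j k => x j ^ k| ≤ (u : ℤ) ^ (e.sum fun _ k => k) := by
    rw [Finsupp.prod, Finsupp.sum, Finset.abs_prod, ← Finset.prod_pow_eq_pow_sum]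
    apply Finset.prod_le_prod
    · intro i _; positivity
    · intro i _; rw [abs_pow]; exact pow_le_pow_left₀ (abs_nonneg _) (hx i) _
  refine h1.trans (pow_le_pow_right₀ ?_ hd)
  exact_mod_cast hu

theorem stmt_17 (n r d u : ℕ) (hu : 1 ≤ u)
    (F : Fin r → MvPolynomial (Fin n) ℤ)
    (hmono : ∀ i, ∃ e : Fin n →₀ ℕ,
      (e.sum fun _ k => k) ≤ d ∧ F i = MvPolynomial.monomial e 1)
    (w : Fin r → ℚ) (wt : Fin r → ℤ)
    (hsign : ∀ b : Fin r → ℤ, (∑ i, |b i|) ≤ 2 * r * (u : ℤ) ^ d →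
      SignType.sign (∑ i, w i * (b i : ℚ)) = SignType.sign (∑ i, wt i * b i)) :
    ∀ x y : Fin n → ℤ, (∀ i, |x i| ≤ (u : ℤ)) → (∀ i, |y i| ≤ (u : ℤ)) →
      SignType.sign ((∑ i, w i * (MvPolynomial.eval x (F i) : ℚ)) -
          (∑ i, w i * (MvPolynomial.eval y (F i) : ℚ))) =
        SignType.sign ((∑ i, wt i * MvPolynomial.eval x (F i)) -
          (∑ i, wt i * MvPolynomial.eval y (F i))) := by
  intro x y hx hy
  set b : Fin r → ℤ := fun i => MvPolynomial.eval x (F i) - MvPolynomial.eval y (F i) with hb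
  have hbound : (∑ i, |b i|) ≤ 2 * r * (u : ℤ) ^ d := by
    have : ∀ i, |b i| ≤ 2 * (u : ℤ) ^ d := by
      intro i
      obtain ⟨e, hd, hF⟩ := hmono i
      have h1 := eval_bound hu e hd x hx
      have h2 := eval_bound hu e hd y hy
      rw [hb]; simp only [hF]
      calc |MvPolynomial.eval x (MvPolynomial.monomial e (1:ℤ)) -
              MvPolynomial.eval y (MvPolynomial.monomial e (1:ℤ))|
          ≤ _ + _ := abs_sub _ _
        _ ≤ (u:ℤ)^d + (u:ℤ)^d := add_le_add h1 h2
        _ = 2 * (u:ℤ)^d := by ring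
    calc (∑ i, |b i|) ≤ ∑ _i : Fin r, 2 * (u:ℤ)^d :=
          Finset.sum_le_sum fun i _ => this i
      _ = r * (2 * (u:ℤ)^d) := by simp [Finset.sum_const, mul_comm]
      _ = 2 * r * (u:ℤ)^d := by ring
  have := hsign b hbound
  have e1 : (∑ i, w i * (MvPolynomial.eval x (F i) : ℚ)) -
      (∑ i, w i * (MvPolynomial.eval y (F i) : ℚ)) = ∑ i, w i * (b i : ℚ) := by
    rw [← Finset.sum_sub_distrib]
    congr 1; funext i; push_cast [hb]; ring
  have e2 : (∑ i, wt i * MvPolynomial.eval x (F i)) -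
      (∑ i, wt i * MvPolynomial.eval y (F i)) = ∑ i, wt i * b i := by
    rw [← Finset.sum_sub_distrib]
    congr 1; funext i; rw [hb]; ring
  rw [e1, e2, this]
end
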